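/- arXiv:2307.01999 — 4 statements merged into one kernel-verified Lean document; each statement's English description precedes it below -/
import Mathlib

section
/- Let A ∈ ℝ^{M×N}, vectors b̲ ≤ b̄ in ℝ^M, and nonnegative vectors C̲_k, C̄_k (k = 1,…,K) and p̲₀, p̄₀ in ℝ^N. Define P̄ = Σ_k C̄_k + p̄₀ and P̲ = Σ_k C̲_k + p̲₀. Then b̲ ≤ A(Σ_k p_k + p₀) ≤ b̄ holds for all p_k ∈ [-C̲_k, C̄_k] and all p₀ ∈ [-p̲₀, p̄₀] if and only if A₊P̄ + A₋P̲ ≤ b̄ and -A₊P̲ - A₋P̄ ≥ b̲, where A₊, A₋ are the componentwise positive and negative parts of A. -/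
private lemma aux_ub (a u l x : ℝ) (hx1 : -l ≤ x) (hx2 : x ≤ u) :
    a * x ≤ max a 0 * u + max (-a) 0 * l := by
  rcases le_total 0 a with h | h
  · rw [max_eq_left h, max_eq_right (by linarith)]; nlinarith
  · rw [max_eq_right h, max_eq_left (by linarith)]; nlinarith

private lemma aux_lb (a u l x : ℝ) (hx1 : -l ≤ x) (hx2 : x ≤ u) :
    -(max a 0 * l) - max (-a) 0 * u ≤ a * x := by
  rcases le_total 0 a with h | h
  · rw [max_eq_left h, max_eq_right (by linarith)]; nlinarith
  · rw [max_eq_right h, max_eq_left (by linarith)]; nlinarith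

/-- Lemma 1, robust reformulation: with `P̄ = Σ_k C̄_k + p̄₀` and
`P̲ = Σ_k C̲_k + p̲₀`, the constraint `b̲ ≤ A(Σ_k p_k + p₀) ≤ b̄` holds for all
`p_k ∈ [-C̲_k, C̄_k]` and `p₀ ∈ [-p̲₀, p̄₀]` iff `A₊P̄ + A₋P̲ ≤ b̄` and
`-A₊P̲ - A₋P̄ ≥ b̲` componentwise. -/
theorem robust_auction_reformulation {K M N : ℕ}
    (A : Matrix (Fin M) (Fin N) ℝ) (bl bu : Fin M → ℝ)
    (hb : ∀ i, bl i ≤ bu i)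
    (Cl Cu : Fin K → Fin N → ℝ) (pl0 pu0 : Fin N → ℝ)
    (hCl : ∀ k j, 0 ≤ Cl k j) (hCu : ∀ k j, 0 ≤ Cu k j)
    (hpl0 : ∀ j, 0 ≤ pl0 j) (hpu0 : ∀ j, 0 ≤ pu0 j)
    (Pbar Pund : Fin N → ℝ)
    (hPbar : ∀ j, Pbar j = (∑ k, Cu k j) + pu0 j)
    (hPund : ∀ j, Pund j = (∑ k, Cl k j) + pl0 j) :
    (∀ (p : Fin K → Fin N → ℝ) (p0 : Fin N → ℝ),
        (∀ k j, -Cl k j ≤ p k j ∧ p k j ≤ Cu k j) →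
        (∀ j, -pl0 j ≤ p0 j ∧ p0 j ≤ pu0 j) →
        ∀ i, bl i ≤ ∑ j, A i j * ((∑ k, p k j) + p0 j) ∧
             ∑ j, A i j * ((∑ k, p k j) + p0 j) ≤ bu i) ↔
      (∀ i, (∑ j, max (A i j) 0 * Pbar j) + (∑ j, max (-(A i j)) 0 * Pund j) ≤ bu i ∧
            bl i ≤ -(∑ j, max (A i j) 0 * Pund j) - ∑ j, max (-(A i j)) 0 * Pbar j) := by
  constructor
  · intro h i
    have h1 := (h (fun k j => if 0 ≤ A i j then Cu k j else -(Cl k j))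
                  (fun j => if 0 ≤ A i j then pu0 j else -(pl0 j))
                  (fun k j => by split <;>
                    exact ⟨by linarith [hCl k j, hCu k j], by linarith [hCl k j, hCu k j]⟩)
                  (fun j => by split <;>
                    exact ⟨by linarith [hpl0 j, hpu0 j], by linarith [hpl0 j, hpu0 j]⟩) i).2
    have h2 := (h (fun k j => if 0 ≤ A i j then -(Cl k j) else Cu k j)
                  (fun j => if 0 ≤ A i j then -(pl0 j) else pu0 j)
                  (fun k j => by split <;>
                    exact ⟨by linarith [hCl k j, hCu k j], by linarith [hCl k j, hCu k j]⟩)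
                  (fun j => by split <;>
                    exact ⟨by linarith [hpl0 j, hpu0 j], by linarith [hpl0 j, hpu0 j]⟩) i).1
    constructor
    · refine le_trans (le_of_eq ?_) h1
      rw [← Finset.sum_add_distrib]
      refine Finset.sum_congr rfl fun j _ => ?_
      by_cases hA : 0 ≤ A i j
      · simp only [if_pos hA, max_eq_left hA, max_eq_right (by linarith : -A i j ≤ 0),
          hPbar j]
        ring
      · simp only [if_neg hA, max_eq_right (le_of_not_ge hA),
          max_eq_left (by linarith [le_of_not_ge hA] : (0:ℝ) ≤ -A i j), hPund j,
          Finset.sum_neg_distrib]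
        ring
    · refine le_trans h2 (le_of_eq ?_)
      rw [← Finset.sum_neg_distrib, ← Finset.sum_sub_distrib]
      refine Finset.sum_congr rfl fun j _ => ?_
      by_cases hA : 0 ≤ A i j
      · simp only [if_pos hA, max_eq_left hA, max_eq_right (by linarith : -A i j ≤ 0),
          hPund j, Finset.sum_neg_distrib]
        ring
      · simp only [if_neg hA, max_eq_right (le_of_not_ge hA),
          max_eq_left (by linarith [le_of_not_ge hA] : (0:ℝ) ≤ -A i j), hPbar j]
        ring
  · intro h p p0 hp hp0 i
    have hx : ∀ j, -(Pund j) ≤ (∑ k, p k j) + p0 j ∧ (∑ k, p k j) + p0 j ≤ Pbar j := by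
      intro j
      have hs1 : ∑ k, -(Cl k j) ≤ ∑ k, p k j :=
        Finset.sum_le_sum fun k _ => (hp k j).1
      have hs2 : ∑ k, p k j ≤ ∑ k, Cu k j :=
        Finset.sum_le_sum fun k _ => (hp k j).2
      rw [Finset.sum_neg_distrib] at hs1
      exact ⟨by rw [hPund]; linarith [(hp0 j).1], by rw [hPbar]; linarith [(hp0 j).2]⟩
    constructor
    · have e : -(∑ j, max (A i j) 0 * Pund j) - ∑ j, max (-(A i j)) 0 * Pbar j
          = ∑ j, (-(max (A i j) 0 * Pund j) - max (-(A i j)) 0 * Pbar j) := by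
        rw [Finset.sum_sub_distrib, Finset.sum_neg_distrib]
      refine le_trans (h i).2 (le_trans (le_of_eq e) (Finset.sum_le_sum fun j _ =>
        aux_lb (A i j) (Pbar j) (Pund j) _ (hx j).1 (hx j).2))
    · refine le_trans (Finset.sum_le_sum fun j _ =>
        aux_ub (A i j) (Pbar j) (Pund j) _ (hx j).1 (hx j).2) ?_
      rw [Finset.sum_add_distrib]
      exact (h i).1
end

section
/- Let J: ℝ^N × ℝ^N → ℝ be convex and differentiable, and let P̄⋆ ≥ p̄₀ and P̲⋆ ≥ p̲₀ componentwise. Suppose λ̄ = ∇_{P̄}J(P̄⋆,P̲⋆) + A₊ᵀμ̄ + A₋ᵀμ̲ + ω̄ and λ̲ = ∇_{P̲}J(P̄⋆,P̲⋆) + A₋ᵀμ̄ + A₊ᵀμ̲ + ω̲, where A₊, A₋ are entrywise nonnegative matrices and μ̄, μ̲, ω̄, ω̲ ≥ 0. Then λ̄ᵀ(P̄⋆ − p̄₀) + λ̲ᵀ(P̲⋆ − p̲₀) ≥ J(P̄⋆, P̲⋆) − J(p̄₀, p̲₀). -/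
/-! By convexity, `J(P⋆) - J(p₀)` is at most the gradient at `P⋆` applied to `P⋆ - p₀`. Each price
exceeds the matching partial derivative by a nonnegative markup (`Aᵀμ + ω`), and the quantities
`P⋆ - p₀` are nonnegative, so pricing them at `λ` instead of the gradient only increases the sum. -/

open Finset Set

theorem ConvexOn.sub_le_fderiv_sub {E : Type*} [NormedAddCommGroup E] [NormedSpace ℝ E]
    {s : Set E} {f : E → ℝ} {f' : E →L[ℝ] ℝ} {x y : E} (hf : ConvexOn ℝ s f)
    (hx : x ∈ s) (hy : y ∈ s) (hf' : HasFDerivAt f f' x) :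
    f x - f y ≤ f' (x - y) := by
  let φ := f ∘ (AffineMap.lineMap x y : ℝ →ᵃ[ℝ] E)
  have hφ : ConvexOn ℝ (Icc 0 1) φ :=
    (hf.comp_affineMap _).subset (fun _ ht => hf.1.lineMap_mem hx hy ht) (convex_Icc 0 1)
  have hφ' : HasDerivAt φ (f' (y - x)) 0 := by
    refine HasFDerivAt.comp_hasDerivAt _ ?_ AffineMap.hasDerivAt_lineMap
    rwa [AffineMap.lineMap_apply_zero]
  have hslope : f' (y - x) ≤ f y - f x := by
    simpa [φ, slope] using hφ.le_slope_of_hasDerivAt (by simp) (by simp) zero_lt_one hφ'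
  rw [← neg_sub y x, map_neg]
  linarith

theorem ContinuousLinearMap.apply_prod_eq_sum {R ι : Type*} [CommSemiring R] [TopologicalSpace R]
    [Fintype ι] [DecidableEq ι] (L : (ι → R) × (ι → R) →L[R] R) (u v : ι → R) :
    L (u, v) = ∑ j, L (Pi.single j 1, 0) * u j + ∑ j, L (0, Pi.single j 1) * v j := by
  conv_lhs => rw [← L.comp_inl_add_comp_inr, pi_eq_sum_univ' u, pi_eq_sum_univ' v]
  simp [map_sum, mul_comm]

/-- key inequality for Proposition 2(i), nonnegative DSO surplus:
let `J` be convex and differentiable, `P̄⋆ ≥ p̄₀`, `P̲⋆ ≥ p̲₀`, and suppose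
`λ̄ = ∇_{P̄}J(P̄⋆,P̲⋆) + A₊ᵀμ̄ + A₋ᵀμ̲ + ω̄` and
`λ̲ = ∇_{P̲}J(P̄⋆,P̲⋆) + A₋ᵀμ̄ + A₊ᵀμ̲ + ω̲` with `A₊, A₋` entrywise nonnegative
and `μ̄, μ̲, ω̄, ω̲ ≥ 0`. Then
`λ̄ᵀ(P̄⋆ − p̄₀) + λ̲ᵀ(P̲⋆ − p̲₀) ≥ J(P̄⋆, P̲⋆) − J(p̄₀, p̲₀)`. -/
theorem dso_surplus_nonneg {N M : ℕ}
    (J : (Fin N → ℝ) × (Fin N → ℝ) → ℝ)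
    (hJconv : ConvexOn ℝ Set.univ J)
    (hJdiff : Differentiable ℝ J)
    (Pbar Pund pbar0 pund0 : Fin N → ℝ)
    (hPbar : ∀ j, pbar0 j ≤ Pbar j) (hPund : ∀ j, pund0 j ≤ Pund j)
    (Aplus Aminus : Matrix (Fin M) (Fin N) ℝ)
    (hAp : ∀ i j, 0 ≤ Aplus i j) (hAm : ∀ i j, 0 ≤ Aminus i j)
    (mubar muund : Fin M → ℝ) (hmb : ∀ i, 0 ≤ mubar i) (hmu : ∀ i, 0 ≤ muund i)
    (ombar omund : Fin N → ℝ) (hob : ∀ j, 0 ≤ ombar j) (hou : ∀ j, 0 ≤ omund j)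
    (lbar lund : Fin N → ℝ)
    (hlbar : ∀ j, lbar j =
      fderiv ℝ J (Pbar, Pund) (Pi.single j 1, 0) +
        (∑ i, Aplus i j * mubar i) + (∑ i, Aminus i j * muund i) + ombar j)
    (hlund : ∀ j, lund j =
      fderiv ℝ J (Pbar, Pund) (0, Pi.single j 1) +
        (∑ i, Aminus i j * mubar i) + (∑ i, Aplus i j * muund i) + omund j) :
    J (Pbar, Pund) - J (pbar0, pund0) ≤
      (∑ j, lbar j * (Pbar j - pbar0 j)) + ∑ j, lund j * (Pund j - pund0 j) := by
  set D := fderiv ℝ J (Pbar, Pund)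
  have weighted_col_nonneg : ∀ (A : Matrix (Fin M) (Fin N) ℝ) (μ : Fin M → ℝ),
      (∀ i j, 0 ≤ A i j) → (∀ i, 0 ≤ μ i) → ∀ j, 0 ≤ ∑ i, A i j * μ i :=
    fun A μ hA hμ j => sum_nonneg fun i _ => mul_nonneg (hA i j) (hμ i)
  have hgrad_bar : ∀ j, D (Pi.single j 1, 0) ≤ lbar j := fun j => by
    linarith [hlbar j, hob j, weighted_col_nonneg Aplus mubar hAp hmb j,
      weighted_col_nonneg Aminus muund hAm hmu j]
  have hgrad_und : ∀ j, D (0, Pi.single j 1) ≤ lund j := fun j => by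
    linarith [hlund j, hou j, weighted_col_nonneg Aminus mubar hAm hmb j,
      weighted_col_nonneg Aplus muund hAp hmu j]
  calc J (Pbar, Pund) - J (pbar0, pund0)
      ≤ D ((Pbar, Pund) - (pbar0, pund0)) :=
        hJconv.sub_le_fderiv_sub trivial trivial (hJdiff _).hasFDerivAt
    _ = (∑ j, D (Pi.single j 1, 0) * (Pbar j - pbar0 j)) +
          ∑ j, D (0, Pi.single j 1) * (Pund j - pund0 j) :=
        D.apply_prod_eq_sum (Pbar - pbar0) (Pund - pund0)
    _ ≤ _ := by
      gcongr with j _ j _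
      · exact sub_nonneg.mpr (hPbar j)
      · exact hgrad_bar j
      · exact sub_nonneg.mpr (hPund j)
      · exact hgrad_und j
end

section
/- Let φ: ℝ^N × ℝ^N → ℝ be concave and differentiable with φ(0,0) ≥ 0. Let C̲⋆, C̄⋆ ≥ 0, and suppose λ̄ = ∇_{C̄}φ(C̲⋆,C̄⋆) + η̄ and λ̲ = ∇_{C̲}φ(C̲⋆,C̄⋆) + η̲ for some η̄, η̲ ≥ 0 satisfying the complementarity conditions η̄ᵀ(C̄^min − C̄⋆) = 0 and η̲ᵀ(C̲^min − C̲⋆) = 0. If either C̄^min = C̲^min = 0 or C̄⋆ > C̄^min and C̲⋆ > C̲^min componentwise, then φ(C̲⋆, C̄⋆) − λ̄ᵀC̄⋆ − λ̲ᵀC̲⋆ ≥ 0. -/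
open Set

lemma concave_grad_ineq {E : Type*} [NormedAddCommGroup E] [NormedSpace ℝ E]
    (φ : E → ℝ) (hconc : ConcaveOn ℝ Set.univ φ) (hdiff : Differentiable ℝ φ)
    (x y : E) : φ y ≤ φ x + fderiv ℝ φ x (y - x) := by
  set g : ℝ → ℝ := fun t => φ (AffineMap.lineMap x y t) with hg
  have hgc : ConcaveOn ℝ Set.univ g := by
    have := hconc.comp_affineMap (AffineMap.lineMap x y)
    simpa [hg, Set.preimage_univ, Function.comp_def] using this
  have hc : HasDerivAt (fun t : ℝ => AffineMap.lineMap x y t) (y - x) 0 := by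
    simp only [AffineMap.lineMap_apply, vsub_eq_sub, vadd_eq_add]
    simpa using ((hasDerivAt_id (0:ℝ)).smul_const (y - x)).add_const x
  have hgd : HasDerivAt g (fderiv ℝ φ x (y - x)) 0 := by
    have h0 : (AffineMap.lineMap x y : ℝ → E) 0 = x := by
      simp [AffineMap.lineMap_apply]
    have h1 : HasFDerivAt φ (fderiv ℝ φ x) ((AffineMap.lineMap x y : ℝ → E) 0) := by
      rw [h0]; exact (hdiff x).hasFDerivAt
    have := h1.comp_hasDerivAt (x := (0:ℝ)) hc
    simpa [hg, Function.comp_def] using this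
  have := hgc.slope_le_of_hasDerivAt (mem_univ 0) (mem_univ 1) one_pos hgd
  have hslope : slope g 0 1 = φ y - φ x := by
    simp [slope, hg, AffineMap.lineMap_apply]
  rw [hslope] at this
  linarith

lemma clm_decomp {N : ℕ} (L : ((Fin N → ℝ) × (Fin N → ℝ)) →L[ℝ] ℝ)
    (u v : Fin N → ℝ) :
    L (u, v) = (∑ j, u j * L (Pi.single j 1, 0)) + ∑ j, v j * L (0, Pi.single j 1) := by
  have hu : (u, v) = (∑ j, u j • ((Pi.single j 1 : Fin N → ℝ), (0 : Fin N → ℝ)))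
      + ∑ j, v j • ((0 : Fin N → ℝ), (Pi.single j 1 : Fin N → ℝ)) := by
    ext i
    · simp [Finset.sum_apply, Prod.fst_sum, Pi.single_apply, mul_ite]
    · simp [Finset.sum_apply, Prod.snd_sum, Pi.single_apply, mul_ite]
  rw [hu]
  rw [map_add, map_sum, map_sum]
  congr 1 <;> refine Finset.sum_congr rfl fun j _ => ?_ <;>
    rw [map_smul, smul_eq_mul]

lemma eta_sum_zero {N : ℕ} (eta Cmin C : Fin N → ℝ) (he : ∀ j, 0 ≤ eta j)
    (hcomp : ∑ j, eta j * (Cmin j - C j) = 0)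
    (hcase : Cmin = 0 ∨ ∀ j, Cmin j < C j) :
    ∑ j, eta j * C j = 0 := by
  rcases hcase with h | h
  · subst h
    have : ∑ j, eta j * C j = -∑ j, eta j * ((0 : Fin N → ℝ) j - C j) := by
      rw [← Finset.sum_neg_distrib]
      exact Finset.sum_congr rfl fun j _ => by simp
    rw [this, hcomp, neg_zero]
  · have hterm : ∀ j ∈ Finset.univ, eta j * (C j - Cmin j) = 0 := by
      rw [← Finset.sum_eq_zero_iff_of_nonneg
        (fun j _ => mul_nonneg (he j) (by linarith [h j]))]
      have : ∑ j, eta j * (C j - Cmin j) = -∑ j, eta j * (Cmin j - C j) := by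
        rw [← Finset.sum_neg_distrib]
        exact Finset.sum_congr rfl fun j _ => by ring
      rw [this, hcomp, neg_zero]
    refine Finset.sum_eq_zero fun j _ => ?_
    have hj := hterm j (Finset.mem_univ j)
    rcases mul_eq_zero.mp hj with h0 | h0
    · rw [h0, zero_mul]
    · exfalso; have := h j; linarith


/-- Proposition 2(ii), nonnegative DERA surplus: let `φ` be
concave and differentiable with `φ(0,0) ≥ 0`, `C̲⋆, C̄⋆ ≥ 0`, and suppose
`λ̄ = ∇_{C̄}φ(C̲⋆,C̄⋆) + η̄` and `λ̲ = ∇_{C̲}φ(C̲⋆,C̄⋆) + η̲` for some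
`η̄, η̲ ≥ 0` with `η̄ᵀ(C̄ᵐⁱⁿ − C̄⋆) = 0` and `η̲ᵀ(C̲ᵐⁱⁿ − C̲⋆) = 0`. If either
`C̄ᵐⁱⁿ = C̲ᵐⁱⁿ = 0`, or `C̄⋆ > C̄ᵐⁱⁿ` and `C̲⋆ > C̲ᵐⁱⁿ` componentwise, then
`φ(C̲⋆, C̄⋆) − λ̄ᵀC̄⋆ − λ̲ᵀC̲⋆ ≥ 0`. -/
theorem dera_surplus_nonneg {N : ℕ}
    (φ : (Fin N → ℝ) × (Fin N → ℝ) → ℝ)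
    (hconc : ConcaveOn ℝ Set.univ φ)
    (hdiff : Differentiable ℝ φ)
    (hφ0 : 0 ≤ φ (0, 0))
    (Cund Cbar : Fin N → ℝ) (hCund : ∀ j, 0 ≤ Cund j) (hCbar : ∀ j, 0 ≤ Cbar j)
    (Cbarmin Cundmin : Fin N → ℝ)
    (etabar etaund : Fin N → ℝ) (heb : ∀ j, 0 ≤ etabar j) (heu : ∀ j, 0 ≤ etaund j)
    (hcompb : ∑ j, etabar j * (Cbarmin j - Cbar j) = 0)
    (hcompu : ∑ j, etaund j * (Cundmin j - Cund j) = 0)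
    (lbar lund : Fin N → ℝ)
    (hlbar : ∀ j, lbar j = fderiv ℝ φ (Cund, Cbar) (0, Pi.single j 1) + etabar j)
    (hlund : ∀ j, lund j = fderiv ℝ φ (Cund, Cbar) (Pi.single j 1, 0) + etaund j)
    (hcase : (Cbarmin = 0 ∧ Cundmin = 0) ∨
      (∀ j, Cbarmin j < Cbar j ∧ Cundmin j < Cund j)) :
    0 ≤ φ (Cund, Cbar) - (∑ j, lbar j * Cbar j) - ∑ j, lund j * Cund j := by
  set L := fderiv ℝ φ (Cund, Cbar) with hL
  -- gradient inequality
  have hgrad : φ (0, 0) ≤ φ (Cund, Cbar) - L (Cund, Cbar) := by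
    have := concave_grad_ineq φ hconc hdiff (Cund, Cbar) (0, 0)
    have h2 : ((0, 0) : (Fin N → ℝ) × (Fin N → ℝ)) - (Cund, Cbar) = -(Cund, Cbar) := by
      simp
    rw [h2, map_neg] at this
    linarith
  have hb0 : ∑ j, etabar j * Cbar j = 0 := by
    refine eta_sum_zero etabar Cbarmin Cbar heb hcompb ?_
    rcases hcase with ⟨h, _⟩ | h
    · exact Or.inl h
    · exact Or.inr fun j => (h j).1
  have hu0 : ∑ j, etaund j * Cund j = 0 := by
    refine eta_sum_zero etaund Cundmin Cund heu hcompu ?_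
    rcases hcase with ⟨_, h⟩ | h
    · exact Or.inl h
    · exact Or.inr fun j => (h j).2
  have hdec := clm_decomp L Cund Cbar
  have hsb : ∑ j, lbar j * Cbar j
      = (∑ j, Cbar j * L (0, Pi.single j 1)) + ∑ j, etabar j * Cbar j := by
    rw [← Finset.sum_add_distrib]
    exact Finset.sum_congr rfl fun j _ => by rw [hlbar j]; ring
  have hsu : ∑ j, lund j * Cund j
      = (∑ j, Cund j * L (Pi.single j 1, 0)) + ∑ j, etaund j * Cund j := by
    rw [← Finset.sum_add_distrib]
    exact Finset.sum_congr rfl fun j _ => by rw [hlund j]; ring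
  rw [hsb, hsu, hb0, hu0, add_zero, add_zero]
  have : (∑ j, Cund j * L (Pi.single j 1, 0)) + ∑ j, Cbar j * L (0, Pi.single j 1)
      = L (Cund, Cbar) := hdec.symm
  linarith
end

section
/- Suppose λ̄^{(j)} = J̄ + A(:,j)ᵀ μ̄ + ω̄^{(j)} for each vertex j, where A is the matrix 2S̃ᵀDS̃ built from the reduced path matrix S̃ of a rooted tree and a nonnegative diagonal matrix D, μ̄ ≥ 0, J̄ ∈ ℝ, and ω̄ = 0 (non-binding maximum-access constraints). If vertex n is an ancestor of vertex m, then λ̄^{(n)} ≥ λ̄^{(m)}. -/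
/-- The set of vertices on the unique path from the root `0` to vertex `v`, in a
rooted tree on vertices `{0,…,n}` given by a parent map `par` with
`par (v+1) ≤ v`. -/
def pathFinset (par : ℕ → ℕ) (hpar : ∀ v, par (v + 1) ≤ v) : ℕ → Finset ℕ
  | 0 => {0}
  | v + 1 => insert (v + 1) (pathFinset par hpar (par (v + 1)))
  decreasing_by exact Nat.lt_succ_of_le (hpar v)

lemma pathFinset_trans (par : ℕ → ℕ) (hpar : ∀ v, par (v + 1) ≤ v) :
    ∀ z y x : ℕ, y ∈ pathFinset par hpar z → x ∈ pathFinset par hpar y →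
      x ∈ pathFinset par hpar z := by
  intro z
  induction z using Nat.strong_induction_on with
  | _ z ih =>
    intro y x hy hx
    match z with
    | 0 =>
      simp [pathFinset] at hy
      subst hy
      exact hx
    | v + 1 =>
      rw [pathFinset] at hy ⊢
      rcases Finset.mem_insert.mp hy with h | h
      · subst h
        rw [pathFinset] at hx
        exact hx
      · exact Finset.mem_insert_of_mem
          (ih (par (v+1)) (Nat.lt_succ_of_le (hpar v)) y x h hx)

/-- Proposition 3, price monotonicity along the feeder: suppose
`λ̄(j) = J̄ + A(:,j)ᵀμ̄ + ω̄(j)` for each non-root bus `j+1`, where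
`A = 2 S̃ᵀ D S̃` with `S̃` the reduced path matrix of a rooted tree
(`S̃ e j = 1` iff vertex `j+1` lies on the path from the root through edge `e`)
and `D = diag(d)`, `d ≥ 0`, `μ̄ ≥ 0`, `J̄ ∈ ℝ`, and `ω̄ = 0` (non-binding
maximum-access constraints). If vertex `a+1` is an ancestor of vertex `b+1`,
then `λ̄(a) ≥ λ̄(b)`. -/
theorem lmap_monotone_along_feeder {n : ℕ}
    (par : ℕ → ℕ) (hpar : ∀ v, par (v + 1) ≤ v)
    (Stil : Matrix (Fin n) (Fin n) ℝ)
    (hS : ∀ (e j : Fin n), Stil e j =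
      (if (j : ℕ) + 1 ∈ pathFinset par hpar ((e : ℕ) + 1) then (1 : ℝ) else 0))
    (d : Fin n → ℝ) (hd : ∀ i, 0 ≤ d i)
    (A : Matrix (Fin n) (Fin n) ℝ)
    (hA : A = (2 : ℝ) • (Stil.transpose * Matrix.diagonal d * Stil))
    (Jbar : ℝ) (mubar : Fin n → ℝ) (hmu : ∀ i, 0 ≤ mubar i)
    (ombar : Fin n → ℝ) (hom : ombar = 0)
    (lbar : Fin n → ℝ)
    (hl : ∀ j, lbar j = Jbar + (∑ i, A i j * mubar i) + ombar j)
    (a b : Fin n) (hanc : (a : ℕ) + 1 ∈ pathFinset par hpar ((b : ℕ) + 1)) :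
    lbar b ≤ lbar a := by
  have hAle : ∀ i j k : Fin n,
      ((k : ℕ) + 1 ∈ pathFinset par hpar ((j : ℕ) + 1)) → A i j ≤ A i k := by
    intro i j k hjk
    subst hA
    rw [Matrix.mul_assoc]
    simp only [Matrix.smul_apply, Matrix.mul_apply, Matrix.transpose_apply,
      Matrix.diagonal_apply, ite_mul, zero_mul, Finset.sum_ite_eq, Finset.mem_univ, if_true, smul_eq_mul]
    have hterm : ∀ e : Fin n,
        Stil e i * (d e * Stil e j) ≤ Stil e i * (d e * Stil e k) := by
      intro e
      have hSnn : 0 ≤ Stil e i := by rw [hS]; positivity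
      have hle : Stil e j ≤ Stil e k := by
        rw [hS, hS]
        by_cases h : (j : ℕ) + 1 ∈ pathFinset par hpar ((e : ℕ) + 1)
        · rw [if_pos h, if_pos (pathFinset_trans par hpar _ _ _ h hjk)]
        · rw [if_neg h]; positivity
      exact mul_le_mul_of_nonneg_left
        (mul_le_mul_of_nonneg_left hle (hd e)) hSnn
    have : ∑ e, Stil e i * (d e * Stil e j) ≤ ∑ e, Stil e i * (d e * Stil e k) :=
      Finset.sum_le_sum (fun e _ => hterm e)
    linarith
  rw [hl, hl, hom]
  simp only [Pi.zero_apply, add_zero, add_le_add_iff_left]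
  exact Finset.sum_le_sum fun i _ =>
    mul_le_mul_of_nonneg_right (hAle i b a hanc) (hmu i)
end
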